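/- Let $m \le n$, $A = \sum_{\tau=1}^m \phi_\tau \phi_\tau^\top + \lambda I$ and $B = \sum_{\tau=1}^n \phi_\tau \phi_\tau^\top + \lambda I$ for vectors $\phi_\tau \in \mathbb{R}^d$ and $\lambda > 0$. If it is not the case that $A^{-1} \prec 2 B^{-1}$ (i.e., $2B^{-1} - A^{-1}$ is not positive definite), then $\log \det B \ge \log \det A + \log 2$. -/

import Mathlib

open Matrix Finset

section helpers

variable {n : Type*} [Fintype n] [DecidableEq n]

lemma my_posSemidef_vecMulVec (v : n → ℝ) : (vecMulVec v v).PosSemidef := by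
  have h : vecMulVec v v = (replicateRow Unit v)ᴴ * replicateRow Unit v := by
    rw [vecMulVec_eq Unit, conjTranspose_replicateRow]
    simp
  rw [h]
  exact posSemidef_conjTranspose_mul_self _

lemma my_posSemidef_sum {ι : Type*} (s : Finset ι) (f : ι → Matrix n n ℝ)
    (h : ∀ i ∈ s, (f i).PosSemidef) : (∑ i ∈ s, f i).PosSemidef := by
  classical
  induction s using Finset.cons_induction with
  | empty => simpa using (Matrix.PosSemidef.zero (n := n) (R := ℝ))
  | cons a s ha ih =>
    rw [Finset.sum_cons]
    exact (h a (Finset.mem_cons_self a s)).add (ih fun i hi => h i (Finset.mem_cons_of_mem hi))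

lemma my_smul_one_posDef {lam : ℝ} (hlam : 0 < lam) :
    (lam • (1 : Matrix n n ℝ)).PosDef := by
  rw [smul_one_eq_diagonal]
  exact Matrix.PosDef.diagonal fun _ => hlam

lemma my_posDef_conj {B C : Matrix n n ℝ} (hB : B.PosDef) (hC : IsUnit C.det) :
    (Cᴴ * B * C).PosDef := by
  refine PosDef.of_dotProduct_mulVec_pos (isHermitian_conjTranspose_mul_mul C hB.1) fun x hx => ?_
  have hinj : Function.Injective (C.mulVec) :=
    mulVec_injective_iff_isUnit.mpr ((isUnit_iff_isUnit_det C).mpr hC)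
  have hCx : C *ᵥ x ≠ 0 := fun h0 => hx (hinj (by simpa using h0))
  simpa only [star_mulVec, dotProduct_mulVec, vecMul_vecMul] using hB.dotProduct_mulVec_pos hCx

open scoped MatrixOrder in
lemma my_sqrt_exists {A : Matrix n n ℝ} (hA : A.PosDef) :
    ∃ S : Matrix n n ℝ, S * S = A ∧ S.IsHermitian :=
  ⟨CFC.sqrt A, CFC.sqrt_mul_sqrt_self A hA.posSemidef.nonneg, (CFC.sqrt_nonneg A).posSemidef.1⟩

end helpers

theorem stmt_0 {d : ℕ} (m n : ℕ) (hmn : m ≤ n) (φ : ℕ → Fin d → ℝ) (lam : ℝ) (hlam : 0 < lam)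
    (A B : Matrix (Fin d) (Fin d) ℝ)
    (hA : A = (∑ τ ∈ Finset.Icc 1 m, vecMulVec (φ τ) (φ τ)) + lam • (1 : Matrix (Fin d) (Fin d) ℝ))
    (hB : B = (∑ τ ∈ Finset.Icc 1 n, vecMulVec (φ τ) (φ τ)) + lam • (1 : Matrix (Fin d) (Fin d) ℝ))
    (h : ¬ ((2 : ℝ) • B⁻¹ - A⁻¹).PosDef) :
    Real.log A.det + Real.log 2 ≤ Real.log B.det := by
  have hApd : A.PosDef := by
    rw [hA]
    exact Matrix.PosDef.posSemidef_add
      (my_posSemidef_sum _ _ fun i _ => my_posSemidef_vecMulVec _) (my_smul_one_posDef hlam)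
  have hBpd : B.PosDef := by
    rw [hB]
    exact Matrix.PosDef.posSemidef_add
      (my_posSemidef_sum _ _ fun i _ => my_posSemidef_vecMulVec _) (my_smul_one_posDef hlam)
  have hsub : Finset.Icc 1 m ⊆ Finset.Icc 1 n := Finset.Icc_subset_Icc_right hmn
  have hBA : (B - A).PosSemidef := by
    have heq : B - A = ∑ τ ∈ Finset.Icc 1 n \ Finset.Icc 1 m, vecMulVec (φ τ) (φ τ) := by
      rw [hA, hB, Finset.sum_sdiff_eq_sub hsub]
      abel
    rw [heq]
    exact my_posSemidef_sum _ _ fun i _ => my_posSemidef_vecMulVec _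
  obtain ⟨S, hSsq, hSH⟩ := my_sqrt_exists hApd
  have hSdet : IsUnit S.det := by
    have h1 : S.det * S.det = A.det := by rw [← det_mul, hSsq]
    have h2 : S.det ≠ 0 := by
      intro h0
      rw [h0, mul_zero] at h1
      exact hApd.det_pos.ne' h1.symm
    exact h2.isUnit
  have hSiH : S⁻¹.IsHermitian := hSH.inv
  have hSidet : IsUnit S⁻¹.det := by
    rw [det_nonsing_inv, Ring.inverse_eq_inv']
    exact (inv_ne_zero hSdet.ne_zero).isUnit
  have hSS : S⁻¹ * S = 1 := nonsing_inv_mul S hSdet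
  have hSS2 : S * S⁻¹ = 1 := mul_nonsing_inv S hSdet
  set M := S⁻¹ * B * S⁻¹ with hMdef
  have hMpd : M.PosDef := by
    have hc := my_posDef_conj hBpd hSidet
    rwa [hSiH.eq] at hc
  have hSAS : S⁻¹ * A * S⁻¹ = 1 := by
    rw [← hSsq, ← mul_assoc, hSS, one_mul, hSS2]
  have hM1 : (M - 1).PosSemidef := by
    have h1 := hBA.conjTranspose_mul_mul_same S⁻¹
    rw [hSiH.eq] at h1
    have h2 : S⁻¹ * (B - A) * S⁻¹ = M - 1 := by
      rw [Matrix.mul_sub, Matrix.sub_mul, hSAS]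
    rwa [h2] at h1
  have hAinv : A⁻¹ = S⁻¹ * S⁻¹ := by rw [← hSsq, Matrix.mul_inv_rev]
  have hMinv : M⁻¹ = S * B⁻¹ * S := by
    rw [hMdef, Matrix.mul_inv_rev, Matrix.mul_inv_rev, nonsing_inv_nonsing_inv S hSdet,
      mul_assoc]
  have hkey : S⁻¹ * ((2 : ℝ) • M⁻¹ - 1) * S⁻¹ = (2 : ℝ) • B⁻¹ - A⁻¹ := by
    rw [Matrix.mul_sub, Matrix.sub_mul, Matrix.mul_smul, Matrix.smul_mul, hMinv, hAinv,
      Matrix.mul_one]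
    congr 2
    rw [← mul_assoc, ← mul_assoc, hSS, one_mul, mul_assoc, hSS2, mul_one]
  have h1le : ∀ i, 1 ≤ hMpd.1.eigenvalues i := by
    intro i
    have hvv : star (⇑(hMpd.1.eigenvectorBasis i)) ⬝ᵥ ⇑(hMpd.1.eigenvectorBasis i) = (1 : ℝ) := by
      have h1 := hMpd.1.eigenvectorBasis.orthonormal.1 i
      have h2 : (inner ℝ (hMpd.1.eigenvectorBasis i) (hMpd.1.eigenvectorBasis i) : ℝ) = 1 := by
        rw [real_inner_self_eq_norm_sq, h1]; norm_num
      rwa [EuclideanSpace.inner_eq_star_dotProduct] at h2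
    have hray := hM1.dotProduct_mulVec_nonneg (⇑(hMpd.1.eigenvectorBasis i))
    rw [Matrix.sub_mulVec, Matrix.one_mulVec, hMpd.1.mulVec_eigenvectorBasis i,
      dotProduct_sub, dotProduct_smul, hvv] at hray
    simpa using hray
  have hexists : ∃ i, 2 ≤ hMpd.1.eigenvalues i := by
    by_contra hc
    push_neg at hc
    apply h
    set U := (hMpd.1.eigenvectorUnitary : Matrix (Fin d) (Fin d) ℝ) with hU
    have hUU : star U * U = 1 := by
      rw [hU]
      exact Unitary.coe_star_mul_self _
    have hUU2 : U * star U = 1 := by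
      rw [hU]
      exact Unitary.coe_mul_star_self _
    have hUdet : IsUnit (star U).det := by
      refine IsUnit.of_mul_eq_one U.det ?_
      rw [← det_mul, hUU]
      exact det_one
    have hspec : M = U * diagonal hMpd.1.eigenvalues * star U := by
      have hs := hMpd.1.spectral_theorem
      simpa using hs
    have hpos : ∀ i, 0 < hMpd.1.eigenvalues i := hMpd.eigenvalues_pos
    have hDinv : diagonal hMpd.1.eigenvalues * diagonal (fun i => (hMpd.1.eigenvalues i)⁻¹)
        = 1 := by
      rw [diagonal_mul_diagonal]
      have hfun : (fun i => hMpd.1.eigenvalues i * (hMpd.1.eigenvalues i)⁻¹)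
          = fun _ => (1 : ℝ) := funext fun i => mul_inv_cancel₀ (hpos i).ne'
      rw [hfun, diagonal_one]
    have hMinv2 : M⁻¹ = U * diagonal (fun i => (hMpd.1.eigenvalues i)⁻¹) * star U := by
      apply inv_eq_right_inv
      calc M * (U * diagonal (fun i => (hMpd.1.eigenvalues i)⁻¹) * star U)
          = U * diagonal hMpd.1.eigenvalues * star U *
            (U * diagonal (fun i => (hMpd.1.eigenvalues i)⁻¹) * star U) := by rw [← hspec]
        _
          = U * (diagonal hMpd.1.eigenvalues * ((star U * U) *
              diagonal (fun i => (hMpd.1.eigenvalues i)⁻¹))) * star U := by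
            simp only [mul_assoc]
        _ = 1 := by rw [hUU, one_mul, hDinv, mul_one, hUU2]
    have hsplit : (2 : ℝ) • M⁻¹ - 1 =
        U * diagonal (fun i => 2 * (hMpd.1.eigenvalues i)⁻¹ - 1) * star U := by
      have hd : diagonal (fun i => 2 * (hMpd.1.eigenvalues i)⁻¹ - 1)
          = (2 : ℝ) • diagonal (fun i => (hMpd.1.eigenvalues i)⁻¹) - 1 := by
        rw [← diagonal_one, ← diagonal_smul, ← diagonal_sub]
        rfl
      rw [hd, Matrix.mul_sub, Matrix.sub_mul, Matrix.mul_smul, Matrix.smul_mul, hMinv2,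
        Matrix.mul_one, hUU2]
    have hdiagpd : (diagonal (fun i => 2 * (hMpd.1.eigenvalues i)⁻¹ - 1)).PosDef := by
      refine Matrix.PosDef.diagonal fun i => ?_
      have h1 := hpos i
      have h2 := hc i
      have h3 : 1 < 2 * (hMpd.1.eigenvalues i)⁻¹ := by
        have h4 : hMpd.1.eigenvalues i * (hMpd.1.eigenvalues i)⁻¹ = 1 := mul_inv_cancel₀ h1.ne'
        nlinarith
      linarith
    have hconj1 : (U * diagonal (fun i => 2 * (hMpd.1.eigenvalues i)⁻¹ - 1) * star U).PosDef := by
      have hc2 := my_posDef_conj hdiagpd hUdet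
      rwa [show (star U)ᴴ = U from conjTranspose_conjTranspose U] at hc2
    have hfinal := my_posDef_conj (hsplit ▸ hconj1) hSidet
    rwa [hSiH.eq, hkey] at hfinal
  have hdetM : 2 ≤ M.det := by
    have hdet := hMpd.1.det_eq_prod_eigenvalues
    obtain ⟨i, hi⟩ := hexists
    have hprod : (1 : ℝ) ≤ ∏ j ∈ Finset.univ.erase i, hMpd.1.eigenvalues j := by
      have hp := Finset.prod_le_prod (s := Finset.univ.erase i) (f := fun _ => (1 : ℝ))
        (g := fun j => hMpd.1.eigenvalues j) (fun j _ => zero_le_one) (fun j _ => h1le j)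
      simpa using hp
    calc (2 : ℝ) = 2 * 1 := by ring
      _ ≤ hMpd.1.eigenvalues i * ∏ j ∈ Finset.univ.erase i, hMpd.1.eigenvalues j :=
          mul_le_mul hi hprod zero_le_one (by linarith [h1le i])
      _ = ∏ j, hMpd.1.eigenvalues j := Finset.mul_prod_erase _ _ (Finset.mem_univ i)
      _ = M.det := by rw [hdet]; norm_num
  have hSMS : S * M * S = B := by
    rw [hMdef, ← mul_assoc, ← mul_assoc, hSS2, one_mul, mul_assoc, hSS, mul_one]
  have hdetB : B.det = M.det * A.det := by
    have hb : B.det = S.det * M.det * S.det := by rw [← hSMS, det_mul, det_mul]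
    have ha : A.det = S.det * S.det := by rw [← hSsq, det_mul]
    rw [hb, ha]
    ring
  have hAdet : 0 < A.det := hApd.det_pos
  have h2A : 2 * A.det ≤ B.det := by
    rw [hdetB]
    nlinarith
  rw [← Real.log_mul hAdet.ne' two_ne_zero]
  exact Real.log_le_log (by positivity) (by linarith)
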